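/- arXiv:2207.05831 — 2 statements merged into one kernel-verified Lean document; each statement's English description precedes it below -/
import Mathlib

section
/- As formal power series in q, ∑_{m∈ℤ} (-1)^m q^{m(2m-1)} = ∏_{i=1}^∞ (1 - q^{4i-3})(1 - q^{4i-1})(1 - q^{4i}). -/
open PowerSeries

open Finset

noncomputable section

def B4 : ℕ → ℕ → PowerSeries ℚ
  | 0, 0 => 1
  | 0, _+1 => 0
  | _+1, 0 => 1
  | n+1, k+1 => B4 n k + X^(4*(k+1)) * B4 n (k+1)

lemma B4_eq_zero : ∀ {n k : ℕ}, n < k → B4 n k = 0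
  | 0, 0, h => absurd h (by omega)
  | 0, k+1, _ => rfl
  | n+1, k+1, h => by
      rw [B4, B4_eq_zero (by omega), B4_eq_zero (by omega)]
      ring

lemma B4_self : ∀ n : ℕ, B4 n n = 1
  | 0 => rfl
  | n+1 => by rw [B4, B4_self n, B4_eq_zero (by omega)]; ring

def EE (N k : ℕ) : ℕ := 2*(N-k)*(N-k-1)

lemma EE_zero_succ (N : ℕ) : EE N 0 + 4*N = EE (N+1) 0 := by
  cases N with
  | zero => rfl
  | succ n => simp only [EE, Nat.sub_zero, Nat.add_sub_cancel]; ring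

lemma EE_succ_succ {N k : ℕ} (h : k < N) : EE N (k+1) + 4*N = EE (N+1) (k+1) + 4*(k+1) := by
  obtain ⟨b, rfl⟩ : ∃ b, N = k+1+b := ⟨N-k-1, by omega⟩
  have h1 : k+1+b - (k+1) = b := by omega
  have h2 : k+1+b+1 - (k+1) = b+1 := by omega
  simp only [EE, h1, h2]
  cases b with
  | zero => simp
  | succ c => simp only [Nat.add_sub_cancel]; ring

lemma EE_eq {N k : ℕ} : EE (N+1) (k+1) = EE N k := by
  have : (N+1)-(k+1) = N-k := by omega
  simp [EE, this]

lemma qbt (N : ℕ) :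
    ∏ j ∈ range N, (Polynomial.X + Polynomial.C ((X : PowerSeries ℚ)^(4*j))) =
      ∑ k ∈ range (N+1),
        Polynomial.C (B4 N k * (X : PowerSeries ℚ)^(EE N k)) * Polynomial.X ^ k := by
  induction N with
  | zero => simp [B4, EE]
  | succ N ih =>
    rw [prod_range_succ, ih, Finset.sum_mul]
    have expand : ∀ k, (Polynomial.C (B4 N k * (X : PowerSeries ℚ)^(EE N k)) * Polynomial.X ^ k) *
        (Polynomial.X + Polynomial.C ((X : PowerSeries ℚ)^(4*N))) =
        Polynomial.C (B4 N k * (X : PowerSeries ℚ)^(EE N k)) * Polynomial.X ^ (k+1)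
        + Polynomial.C (B4 N k * (X : PowerSeries ℚ)^(EE N k + 4*N)) * Polynomial.X ^ k := by
      intro k
      simp only [mul_add, pow_succ, map_mul, pow_add]
      ring
    rw [Finset.sum_congr rfl (fun k _ => expand k), Finset.sum_add_distrib]
    rw [Finset.sum_range_succ' (fun k => Polynomial.C (B4 N k * (X : PowerSeries ℚ)^(EE N k + 4*N)) * Polynomial.X ^ k) N]
    rw [Finset.sum_range_succ' (fun k => Polynomial.C (B4 (N+1) k * (X : PowerSeries ℚ)^(EE (N+1) k)) * Polynomial.X ^ k) (N+1)]
    have h0 : Polynomial.C (B4 N 0 * (X : PowerSeries ℚ)^(EE N 0 + 4*N)) * Polynomial.X ^ 0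
        = Polynomial.C (B4 (N+1) 0 * (X : PowerSeries ℚ)^(EE (N+1) 0)) * Polynomial.X ^ 0 := by
      rw [EE_zero_succ]
      cases N with
      | zero => rfl
      | succ n => rfl
    have hext : ∑ k ∈ range N, Polynomial.C (B4 N (k+1) * (X : PowerSeries ℚ)^(EE N (k+1) + 4*N)) * Polynomial.X ^ (k+1)
        = ∑ k ∈ range (N+1), Polynomial.C (B4 N (k+1) * (X : PowerSeries ℚ)^(EE N (k+1) + 4*N)) * Polynomial.X ^ (k+1) := by
      rw [Finset.sum_range_succ, B4_eq_zero (by omega : N < N+1)]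
      simp
    rw [hext, h0, ← add_assoc, ← Finset.sum_add_distrib]
    congr 1
    apply Finset.sum_congr rfl
    intro k hk
    rw [Finset.mem_range] at hk
    have hB : B4 (N+1) (k+1) = B4 N k + X^(4*(k+1)) * B4 N (k+1) := rfl
    rcases Nat.lt_or_ge k N with h | h
    · have hEeq : EE (N+1) (k+1) = EE N k := EE_eq
      rw [EE_succ_succ h, hB, ← hEeq]
      simp only [map_mul, map_add, pow_add]
      ring
    · have hkN : k = N := by omega
      subst hkN
      rw [hB, B4_eq_zero (by omega : k < k+1), B4_self]
      have e1 : EE k k = 0 := by simp [EE]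
      have e2 : EE (k+1) (k+1) = 0 := by simp [EE]
      rw [e1, e2]
      simp

def FP (a b : ℕ) : PowerSeries ℚ := ∏ j ∈ Finset.Ico a b, (1 - X^(4*(j+1)))

lemma FP_succ_top {a b : ℕ} (h : a ≤ b) : FP a (b+1) = FP a b * (1 - X^(4*(b+1))) := by
  rw [FP, FP, Finset.prod_Ico_succ_top (by omega)]

lemma FP_eq_of_ge {a b : ℕ} (h : b ≤ a) : FP a b = 1 := by
  rw [FP, Finset.Ico_eq_empty (by omega), Finset.prod_empty]

lemma FP_succ_bot {a b : ℕ} (h : a < b) : FP a b = (1 - X^(4*(a+1))) * FP (a+1) b := by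
  rw [FP, FP, Finset.prod_eq_prod_Ico_succ_bot h]

lemma FP_mul {a b c : ℕ} (h1 : a ≤ b) (h2 : b ≤ c) : FP a b * FP b c = FP a c := by
  rw [FP, FP, FP, Finset.prod_Ico_consecutive _ h1 h2]

lemma B4_mul_FP : ∀ N k : ℕ, k ≤ N → B4 N k * FP 0 k = FP (N-k) N
  | 0, 0, _ => by simp [B4, FP]
  | N+1, 0, _ => by
      show (1 : PowerSeries ℚ) * FP 0 0 = FP (N+1-0) (N+1)
      rw [FP_eq_of_ge (le_refl 0), FP_eq_of_ge (by omega)]; ring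
  | N+1, k+1, h => by
      show (B4 N k + X^(4*(k+1)) * B4 N (k+1)) * FP 0 (k+1) = _
      rcases Nat.lt_or_ge k N with hkN | hkN
      · have ih1 := B4_mul_FP N k (by omega)
        have ih2 := B4_mul_FP N (k+1) (by omega)
        have e1 : N+1-(k+1) = N-k := by omega
        rw [e1]
        have f1 : FP 0 (k+1) = FP 0 k * (1 - X^(4*(k+1))) := FP_succ_top (Nat.zero_le k)
        have e2 : FP (N-(k+1)) N = (1 - X^(4*(N-k))) * FP (N-k) N := by
          have h' : N-(k+1)+1 = N-k := by omega
          rw [FP_succ_bot (by omega : N-(k+1) < N), h']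
        have e3 : FP (N-k) (N+1) = FP (N-k) N * (1 - X^(4*(N+1))) := FP_succ_top (by omega)
        have epow : (X : PowerSeries ℚ)^(4*(N+1)) = X^(4*(k+1)) * X^(4*(N-k)) := by
          rw [← pow_add]
          congr 1
          omega
        linear_combination (B4 N k) * f1 + (1 - X^(4*(k+1))) * ih1 + X^(4*(k+1)) * ih2
          + X^(4*(k+1)) * e2 - e3 + FP (N-k) N * epow
      · have hkN' : k = N := by omega
        subst hkN'
        rw [B4_self, B4_eq_zero (by omega : k < k+1), Nat.sub_self]
        ring
  termination_by N k => N

def hh (n k : ℕ) : ℕ := (((k:ℤ) - n) * (2*((k:ℤ)-n)+1)).toNat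

lemma hh_cast {n k : ℕ} : (hh n k : ℤ) = ((k:ℤ) - n) * (2*((k:ℤ)-n)+1) := by
  apply Int.toNat_of_nonneg
  rcases le_or_gt 0 ((k:ℤ) - (n:ℤ)) with h | h
  · nlinarith
  · nlinarith

lemma exp_eq {n k : ℕ} (hn : 1 ≤ n) (hk : k ≤ 2*n) :
    EE (2*n) k + (4*n-1)*k = 6*n^2 - 3*n + hh n k := by
  have h1 : 1 ≤ 4*n := by omega
  have h2 : 3*n ≤ 6*n^2 := by nlinarith
  apply Nat.cast_injective (R := ℤ)
  push_cast [Nat.cast_sub h1, Nat.cast_sub h2, hh_cast]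
  rcases Nat.lt_or_ge k (2*n) with h | h
  · have e : (EE (2*n) k : ℤ) = 2*((2*n:ℤ)-k)*((2*n:ℤ)-k-1) := by
      simp only [EE, Nat.sub_sub]
      push_cast [Nat.cast_sub (by omega : k ≤ 2*n), Nat.cast_sub (by omega : k+1 ≤ 2*n)]
      ring
    rw [e]; ring
  · have hk2 : k = 2*n := by omega
    subst hk2
    have e : EE (2*n) (2*n) = 0 := by simp [EE]
    rw [e]; push_cast; ring


lemma star (n : ℕ) (hn : 1 ≤ n) :
    ∏ i ∈ range n, ((1 - (X:PowerSeries ℚ)^(4*i+1)) * (1 - X^(4*i+3))) =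
      ∑ k ∈ range (2*n+1), (-1:PowerSeries ℚ)^(n+k) * (B4 (2*n) k * X^(hh n k)) := by
  have H := congrArg (Polynomial.eval (-(X^(4*n-1)) : PowerSeries ℚ)) (qbt (2*n))
  rw [Polynomial.eval_prod, Polynomial.eval_finset_sum] at H
  simp only [Polynomial.eval_add, Polynomial.eval_X, Polynomial.eval_C, Polynomial.eval_mul,
    Polynomial.eval_pow] at H
  rw [(by rw [two_mul] : range (2*n) = range (n+n))] at H
  rw [prod_range_add (fun j => (-(X^(4*n-1)) + X^(4*j) : PowerSeries ℚ)) n n] at H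
  -- sum of j over range n
  have hgauss := Finset.sum_range_id_mul_two n
  have hsum : ∑ j ∈ range n, 4*j = 2*(n*(n-1)) := by
    have : ∑ j ∈ range n, 4*j = (∑ j ∈ range n, j) * 2 * 2 := by
      rw [Finset.sum_mul, Finset.sum_mul]
      apply Finset.sum_congr rfl
      intros; ring
    rw [this, hgauss]; ring
  have hexp : 2*(n*(n-1)) + (4*n-1)*n = 6*n^2-3*n := by
    have h1 : (1:ℕ) ≤ 4*n := by omega
    have h2 : 3*n ≤ 6*n^2 := by nlinarith
    zify [h1, h2, hn]
    have h3 : (1:ℤ) ≤ n := by exact_mod_cast hn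
    nlinarith [h3]
  have HA : ∏ j ∈ range n, (-(X^(4*n-1)) + X^(4*j) : PowerSeries ℚ)
      = X^(2*(n*(n-1))) * ∏ i ∈ range n, (1 - X^(4*i+3)) := by
    have hfac : ∀ j ∈ range n, (-(X^(4*n-1)) + X^(4*j) : PowerSeries ℚ)
        = X^(4*j) * (1 - X^(4*(n-1-j)+3)) := by
      intro j hj
      rw [Finset.mem_range] at hj
      have he : 4*j + (4*(n-1-j)+3) = 4*n-1 := by omega
      rw [mul_sub, mul_one, ← pow_add, he]
      ring
    rw [Finset.prod_congr rfl hfac, Finset.prod_mul_distrib,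
      Finset.prod_pow_eq_pow_sum, hsum,
      Finset.prod_range_reflect (fun i => (1 - X^(4*i+3) : PowerSeries ℚ)) n]
  have HB : ∏ j ∈ range n, (-(X^(4*n-1)) + X^(4*(n+j)) : PowerSeries ℚ)
      = (-1)^n * (X^((4*n-1)*n) * ∏ i ∈ range n, (1 - X^(4*i+1))) := by
    have hfac : ∀ j ∈ range n, (-(X^(4*n-1)) + X^(4*(n+j)) : PowerSeries ℚ)
        = (-(X^(4*n-1))) * (1 - X^(4*j+1)) := by
      intro j hj
      have he : (4*n-1) + (4*j+1) = 4*(n+j) := by omega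
      rw [neg_mul, mul_sub, mul_one, ← pow_add, he]
      ring
    rw [Finset.prod_congr rfl hfac, Finset.prod_mul_distrib, Finset.prod_const,
      Finset.card_range, neg_pow, ← pow_mul]
    ring
  have HR : ∀ k ∈ range (2*n+1), (B4 (2*n) k * X^(EE (2*n) k) * ((-(X^(4*n-1)) : PowerSeries ℚ))^k)
      = (-1)^k * (X^(6*n^2-3*n) * (B4 (2*n) k * X^(hh n k))) := by
    intro k hk
    rw [Finset.mem_range] at hk
    rw [neg_pow, ← pow_mul]
    have : (X:PowerSeries ℚ)^(EE (2*n) k) * X^((4*n-1)*k) = X^(6*n^2-3*n) * X^(hh n k) := by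
      rw [← pow_add, ← pow_add, exp_eq hn (by omega)]
    calc B4 (2*n) k * X^(EE (2*n) k) * ((-1)^k * (X^((4*n-1)*k)))
        = (-1)^k * (B4 (2*n) k * (X^(EE (2*n) k) * X^((4*n-1)*k))) := by ring
      _ = (-1)^k * (X^(6*n^2-3*n) * (B4 (2*n) k * X^(hh n k))) := by rw [this]; ring
  rw [HA, HB, Finset.sum_congr rfl HR] at H
  apply mul_left_cancel₀ (pow_ne_zero (6*n^2-3*n) (X_ne_zero : (X:PowerSeries ℚ) ≠ 0))
  have hneg : ((-1 : PowerSeries ℚ))^n * (-1)^n = 1 := by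
    rw [← mul_pow]; simp
  calc X^(6*n^2-3*n) * ∏ i ∈ range n, ((1 - (X:PowerSeries ℚ)^(4*i+1)) * (1 - X^(4*i+3)))
      = (-1)^n * ((X^(2*(n*(n-1))) * ∏ i ∈ range n, (1 - X^(4*i+3))) * ((-1)^n * (X^((4*n-1)*n) * ∏ i ∈ range n, (1 - X^(4*i+1))))) := by
        rw [← hexp, pow_add]
        calc X^(2*(n*(n-1))) * X^((4*n-1)*n) * ∏ i ∈ range n, ((1 - (X:PowerSeries ℚ)^(4*i+1)) * (1 - X^(4*i+3)))
            = ((-1)^n * (-1)^n) * (X^(2*(n*(n-1))) * X^((4*n-1)*n) * ((∏ i ∈ range n, (1 - (X:PowerSeries ℚ)^(4*i+1))) * ∏ i ∈ range n, (1 - X^(4*i+3)))) := by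
              rw [hneg, Finset.prod_mul_distrib]; ring
          _ = (-1)^n * ((X^(2*(n*(n-1))) * ∏ i ∈ range n, (1 - X^(4*i+3))) * ((-1)^n * (X^((4*n-1)*n) * ∏ i ∈ range n, (1 - X^(4*i+1))))) := by ring
  _ = (-1)^n * ∑ k ∈ range (2*n+1), ((-1:PowerSeries ℚ)^k * (X^(6*n^2-3*n) * (B4 (2*n) k * X^(hh n k)))) := by rw [H]
  _ = X^(6*n^2-3*n) * ∑ k ∈ range (2*n+1), (-1:PowerSeries ℚ)^(n+k) * (B4 (2*n) k * X^(hh n k)) := by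
        rw [Finset.mul_sum, Finset.mul_sum]
        apply Finset.sum_congr rfl
        intro k hk
        rw [pow_add]
        ring

lemma dvd_sub_one_mul {c : ℕ} {u v : PowerSeries ℚ} (hu : X^c ∣ u - 1) (hv : X^c ∣ v - 1) :
    X^c ∣ u*v - 1 := by
  have h : u*v - 1 = u*(v-1) + (u-1) := by ring
  rw [h]
  exact dvd_add (Dvd.dvd.mul_left hv u) hu

lemma FP_sub_one {c a : ℕ} (h : c ≤ 4*(a+1)) : ∀ b, X^c ∣ FP a b - 1
  | 0 => by rw [FP_eq_of_ge (by omega)]; simp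
  | b+1 => by
    rcases le_or_gt (b+1) a with hb | hb
    · rw [FP_eq_of_ge hb]; simp
    · rw [FP_succ_top (by omega)]
      apply dvd_sub_one_mul (FP_sub_one h b)
      have e : (1 - X^(4*(b+1)) - 1 : PowerSeries ℚ) = -(X^(4*(b+1))) := by ring
      rw [e]
      exact dvd_neg.mpr (pow_dvd_pow X (le_trans h (by omega)))

lemma FP_isUnit (a b : ℕ) : IsUnit (FP a b) := by
  rw [PowerSeries.isUnit_iff_constantCoeff, FP, map_prod]
  have : ∀ j ∈ Finset.Ico a b, constantCoeff (1 - X^(4*(j+1)) : PowerSeries ℚ) = 1 := by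
    intro j hj
    rw [map_sub, map_one, map_pow, constantCoeff_X]
    simp
  rw [Finset.prod_congr rfl this]
  simp

lemma B4_FP_cong {n k c : ℕ} (hk : k ≤ 2*n) (hc1 : c ≤ 4*(k+1)) (hc2 : c ≤ 4*(n+1))
    (hc3 : c ≤ 4*(2*n-k+1)) : X^c ∣ B4 (2*n) k * FP 0 n - 1 := by
  rcases le_or_gt k n with h | h
  · have key := B4_mul_FP (2*n) k (by omega)
    have hsplit : FP 0 n = FP 0 k * FP k n := (FP_mul (Nat.zero_le k) h).symm
    have : B4 (2*n) k * FP 0 n = FP (2*n-k) (2*n) * FP k n := by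
      rw [hsplit, ← mul_assoc, key]
    rw [this]
    exact dvd_sub_one_mul (FP_sub_one (by omega) (2*n)) (FP_sub_one (by omega) n)
  · have key := B4_mul_FP (2*n) k (by omega)
    have hsplit : FP 0 k = FP 0 n * FP n k := (FP_mul (Nat.zero_le n) (by omega)).symm
    have key2 : (B4 (2*n) k * FP 0 n) * FP n k = FP (2*n-k) (2*n) := by
      rw [mul_assoc, ← hsplit, key]
    obtain ⟨w, hw⟩ := (FP_isUnit n k).exists_right_inv
    have hexp : B4 (2*n) k * FP 0 n - 1 = (FP (2*n-k) (2*n) - FP n k) * w := by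
      have h1 : (B4 (2*n) k * FP 0 n - 1) * (FP n k * w) = (FP (2*n-k) (2*n) - FP n k) * w := by
        rw [← mul_assoc, sub_mul, key2]
        ring
      rw [hw, mul_one] at h1
      exact h1
    rw [hexp]
    apply Dvd.dvd.mul_right
    have : FP (2*n-k) (2*n) - FP n k = (FP (2*n-k) (2*n) - 1) - (FP n k - 1) := by ring
    rw [this]
    exact dvd_sub (FP_sub_one (by omega) (2*n)) (FP_sub_one (by omega) k)

lemma coeff_eq_of_sub_dvd {d : ℕ} {f g : PowerSeries ℚ} (h : X^(d+1) ∣ f - g) :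
    coeff d f = coeff d g := by
  have h0 := (X_pow_dvd_iff.mp h) d (by omega)
  rw [map_sub, sub_eq_zero] at h0
  exact h0

lemma hex_inj {m m' : ℤ} (h : m*(2*m-1) = m'*(2*m'-1)) : m = m' := by
  have h2 : (m - m') * (2*(m+m') - 1) = 0 := by linear_combination h
  rcases mul_eq_zero.mp h2 with h3 | h3
  · omega
  · omega

open Classical in
/-- the coefficient function of the hexagonal-number series -/
noncomputable def hexC (d : ℕ) : ℚ := if h : ∃ m : ℤ, m*(2*m-1) = (d:ℤ) then (-1:ℚ)^(h.choose) else 0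

lemma neg_one_pow_eq_zpow (a : ℕ) (m : ℤ) (h : (a:ℤ) % 2 = m % 2) :
    ((-1:ℚ))^a = (-1:ℚ)^m := by
  rcases Nat.even_or_odd a with ha | ha
  · rw [ha.neg_one_pow]
    have : Even m := by
      rcases ha with ⟨r, hr⟩
      exact ⟨(a:ℤ)/2 + (m - a)/2, by omega⟩
    rw [this.neg_one_zpow]
  · rw [ha.neg_one_pow]
    have : Odd m := by
      rcases ha with ⟨r, hr⟩
      exact ⟨(m-1)/2, by omega⟩
    rw [this.neg_one_zpow]

lemma coeff_partial (d : ℕ) (n : ℕ) (hn : n ≥ 2*d+2) :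
    coeff d (∏ i ∈ range n,
      ((1 - (X:PowerSeries ℚ)^(4*i+1)) * (1 - X^(4*i+3)) * (1 - X^(4*(i+1))))) = hexC d := by
  have hsplit : ∏ i ∈ range n,
      ((1 - (X:PowerSeries ℚ)^(4*i+1)) * (1 - X^(4*i+3)) * (1 - X^(4*(i+1))))
      = (∏ i ∈ range n, ((1 - (X:PowerSeries ℚ)^(4*i+1)) * (1 - X^(4*i+3)))) * FP 0 n := by
    rw [FP, ← Finset.range_eq_Ico, ← Finset.prod_mul_distrib]
  rw [hsplit, star n (by omega), Finset.sum_mul]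
  have hterm : ∀ k ∈ range (2*n+1),
      ((-1:PowerSeries ℚ)^(n+k) * (B4 (2*n) k * X^(hh n k))) * FP 0 n
      = C ((-1:ℚ)^(n+k)) * ((B4 (2*n) k * FP 0 n) * X^(hh n k)) := by
    intro k hk
    have : ((-1:PowerSeries ℚ))^(n+k) = C ((-1:ℚ)^(n+k)) := by
      rw [map_pow, map_neg, map_one]
    rw [this]; ring
  rw [Finset.sum_congr rfl hterm, map_sum]
  have hcoeff : ∀ k ∈ range (2*n+1),
      coeff d (C ((-1:ℚ)^(n+k)) * ((B4 (2*n) k * FP 0 n) * X^(hh n k)))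
      = (-1:ℚ)^(n+k) * (if hh n k = d then 1 else 0) := by
    intro k hk
    rw [Finset.mem_range] at hk
    rw [coeff_C_mul]
    congr 1
    rcases le_or_gt (hh n k) d with hhd | hhd
    · -- |k - n| ≤ d, congruence applies
      have hm : |(k:ℤ) - n| ≤ d := by
        have hc := hh_cast (n := n) (k := k)
        have : (hh n k : ℤ) ≤ d := by exact_mod_cast hhd
        rcases le_or_gt 0 ((k:ℤ) - n) with h0 | h0
        · rw [abs_of_nonneg h0]; nlinarith
        · rw [abs_of_neg h0]; nlinarith
      have hm2 := abs_le.mp hm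
      have hcong : X^(d+1) ∣ B4 (2*n) k * FP 0 n - 1 := by
        apply B4_FP_cong (by omega) <;> omega
      have : coeff d ((B4 (2*n) k * FP 0 n) * X^(hh n k)) = coeff d ((X:PowerSeries ℚ)^(hh n k)) := by
        apply coeff_eq_of_sub_dvd
        have e : (B4 (2*n) k * FP 0 n) * X^(hh n k) - X^(hh n k)
            = (B4 (2*n) k * FP 0 n - 1) * X^(hh n k) := by ring
        rw [e]
        exact hcong.mul_right _
      rw [this, coeff_X_pow]
      by_cases he : hh n k = d
      · simp [he]
      · simp [he, Ne.symm he]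
    · -- hh n k > d: coefficient vanishes
      have h0 : coeff d ((B4 (2*n) k * FP 0 n) * X^(hh n k)) = 0 := by
        have hdvd : (X:PowerSeries ℚ)^(d+1) ∣ (B4 (2*n) k * FP 0 n) * X^(hh n k) :=
          Dvd.dvd.mul_left (pow_dvd_pow X (by omega)) _
        exact (X_pow_dvd_iff.mp hdvd) d (by omega)
      rw [h0, if_neg (by omega)]
  rw [Finset.sum_congr rfl hcoeff]
  by_cases hex : ∃ m : ℤ, m*(2*m-1) = (d:ℤ)
  · obtain ⟨m, hm⟩ := hex
    have hmabs : |m| ≤ (d:ℤ) := by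
      rcases le_or_gt 0 m with h0 | h0
      · rw [abs_of_nonneg h0]; nlinarith
      · rw [abs_of_neg h0]; nlinarith
    have hm1 := abs_le.mp hmabs
    have hdn : (d:ℤ) < n := by exact_mod_cast (by omega : d < n)
    set k₀ : ℕ := ((n:ℤ) - m).toNat with hk₀
    have hk₀cast : (k₀:ℤ) = (n:ℤ) - m := Int.toNat_of_nonneg (by omega)
    have hk₀mem : k₀ ∈ range (2*n+1) := by
      rw [Finset.mem_range]
      omega
    have hhk₀ : hh n k₀ = d := by
      have := hh_cast (n := n) (k := k₀)
      rw [hk₀cast] at this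
      have e : ((n:ℤ) - m - n) * (2*((n:ℤ) - m - n)+1) = m*(2*m-1) := by ring
      rw [e, hm] at this
      exact_mod_cast this
    rw [Finset.sum_eq_single k₀]
    · rw [hhk₀, if_pos rfl, mul_one]
      rw [hexC, dif_pos ⟨m, hm⟩]
      have hch : (⟨m, hm⟩ : ∃ m : ℤ, m*(2*m-1) = (d:ℤ)).choose = m :=
        hex_inj ((⟨m, hm⟩ : ∃ m : ℤ, m*(2*m-1) = (d:ℤ)).choose_spec.trans hm.symm)
      rw [hch]
      apply neg_one_pow_eq_zpow
      omega
    · intro k hkmem hkne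
      rw [Finset.mem_range] at hkmem
      rw [if_neg, mul_zero]
      intro hcon
      apply hkne
      have hc := hh_cast (n := n) (k := k)
      rw [hcon] at hc
      have hm' : ((n:ℤ) - k)*(2*((n:ℤ) - k)-1) = (d:ℤ) := by
        linear_combination -hc
      have := hex_inj (hm'.trans hm.symm)
      omega
    · intro hcon
      exact absurd hk₀mem hcon
  · rw [hexC, dif_neg hex]
    apply Finset.sum_eq_zero
    intro k hkmem
    rw [if_neg, mul_zero]
    intro hcon
    apply hex
    refine ⟨(n:ℤ) - k, ?_⟩
    have hc := hh_cast (n := n) (k := k)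
    rw [hcon] at hc
    linear_combination -hc

lemma hex_nonneg (m : ℤ) : 0 ≤ m*(2*m-1) := by
  rcases lt_trichotomy m 0 with h | h | h
  · nlinarith
  · simp [h]
  · have h1 : 1 ≤ m := h
    nlinarith

/-- The limit series. -/
noncomputable def TT : PowerSeries ℚ := PowerSeries.mk hexC

/-- The coefficientwise (product) topology on `ℚ⟦X⟧`. -/
noncomputable instance : TopologicalSpace (PowerSeries ℚ) :=
  (inferInstance : TopologicalSpace ((Unit →₀ ℕ) → ℚ))

noncomputable instance : T2Space (PowerSeries ℚ) :=
  inferInstanceAs (T2Space ((Unit →₀ ℕ) → ℚ))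

lemma coeff_eval (d : ℕ) (f : PowerSeries ℚ) :
    coeff d f = f (Finsupp.single () d) := rfl

lemma tendsto_iff_coeff {α : Type*} {l : Filter α} {F : α → PowerSeries ℚ} {S : PowerSeries ℚ} :
    Filter.Tendsto F l (nhds S) ↔
      ∀ d : ℕ, Filter.Tendsto (fun a => coeff d (F a)) l (nhds (coeff d S)) := by
  have base : Filter.Tendsto F l (nhds S) ↔
      ∀ x : (Unit →₀ ℕ), Filter.Tendsto (fun a => F a x) l (nhds (S x)) := tendsto_pi_nhds
  rw [base]
  constructor
  · intro h d
    simpa [coeff_eval] using h (Finsupp.single () d)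
  · intro h x
    have hx : x = Finsupp.single () (x ()) := Finsupp.unique_single x
    rw [hx]
    simpa [coeff_eval] using h (x ())

lemma hasSum_TT :
    HasSum (fun m : ℤ => C ((-1 : ℚ) ^ m) * (X : PowerSeries ℚ) ^ (m * (2 * m - 1)).toNat) TT := by
  rw [HasSum, tendsto_iff_coeff]
  intro d
  have key : HasSum (fun m : ℤ => (-1:ℚ)^m * if d = (m*(2*m-1)).toNat then 1 else 0)
      (coeff d TT) := by
    by_cases hex : ∃ m₀ : ℤ, m₀*(2*m₀-1) = (d:ℤ)
    · obtain ⟨m₀, hm₀⟩ := hex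
      have hfun : (fun m : ℤ => (-1:ℚ)^m * if d = (m*(2*m-1)).toNat then 1 else 0)
          = fun m : ℤ => if m = m₀ then (-1:ℚ)^m₀ else 0 := by
        funext m
        by_cases hm : m = m₀
        · subst hm
          rw [if_pos rfl, if_pos, mul_one]
          rw [hm₀]
          exact (Int.toNat_natCast d).symm
        · rw [if_neg hm, if_neg, mul_zero]
          intro hcon
          apply hm
          apply hex_inj
          rw [hm₀, hcon, Int.toNat_of_nonneg (hex_nonneg m)]
      rw [hfun]
      have hval : coeff d TT = (-1:ℚ)^m₀ := by
        rw [TT, coeff_mk, hexC, dif_pos ⟨m₀, hm₀⟩]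
        congr 1
        exact hex_inj ((⟨m₀, hm₀⟩ : ∃ m : ℤ, m*(2*m-1) = (d:ℤ)).choose_spec.trans hm₀.symm)
      rw [hval]
      exact hasSum_ite_eq m₀ ((-1:ℚ)^m₀)
    · have hfun : (fun m : ℤ => (-1:ℚ)^m * if d = (m*(2*m-1)).toNat then 1 else 0)
          = fun _ : ℤ => (0:ℚ) := by
        funext m
        rw [if_neg, mul_zero]
        intro hcon
        apply hex
        refine ⟨m, ?_⟩
        rw [hcon, Int.toNat_of_nonneg (hex_nonneg m)]
      have hval : coeff d TT = 0 := by
        rw [TT, coeff_mk, hexC, dif_neg hex]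
      rw [hfun, hval]
      exact hasSum_zero
  apply Filter.Tendsto.congr _ key
  intro s
  rw [map_sum]
  apply Finset.sum_congr rfl
  intro m _
  rw [coeff_C_mul, coeff_X_pow]

lemma g_sub_one {c i : ℕ} (h : c ≤ 4*i+1) :
    X^c ∣ ((1 - (X:PowerSeries ℚ)^(4*(i+1)-3)) * (1 - X^(4*(i+1)-1)) * (1 - X^(4*(i+1)))) - 1 := by
  have aux : ∀ e : ℕ, c ≤ e → X^c ∣ (1 - (X:PowerSeries ℚ)^e) - 1 := by
    intro e he
    have : (1 - (X:PowerSeries ℚ)^e) - 1 = -(X^e) := by ring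
    rw [this]
    exact dvd_neg.mpr (pow_dvd_pow X he)
  exact dvd_sub_one_mul (dvd_sub_one_mul (aux _ (by omega)) (aux _ (by omega))) (aux _ (by omega))

lemma prod_sub_one {c : ℕ} {s : Finset ℕ} {f : ℕ → PowerSeries ℚ}
    (h : ∀ i ∈ s, X^c ∣ f i - 1) : X^c ∣ (∏ i ∈ s, f i) - 1 := by
  induction s using Finset.cons_induction with
  | empty => simp
  | cons a s ha ih =>
    rw [Finset.prod_cons]
    exact dvd_sub_one_mul (h a (by simp)) (ih (fun i hi => h i (by simp [hi])))

lemma hasProd_TT :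
    HasProd (fun i : ℕ => (1 - (X : PowerSeries ℚ) ^ (4 * (i + 1) - 3)) *
        (1 - (X : PowerSeries ℚ) ^ (4 * (i + 1) - 1)) *
        (1 - (X : PowerSeries ℚ) ^ (4 * (i + 1)))) TT := by
  rw [HasProd, tendsto_iff_coeff]
  intro d
  set g : ℕ → PowerSeries ℚ := fun i => (1 - (X : PowerSeries ℚ) ^ (4 * (i + 1) - 3)) *
      (1 - (X : PowerSeries ℚ) ^ (4 * (i + 1) - 1)) * (1 - (X : PowerSeries ℚ) ^ (4 * (i + 1))) with hg
  have hev : ∀ᶠ s : Finset ℕ in Filter.atTop, coeff d (∏ i ∈ s, g i) = coeff d TT := by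
    filter_upwards [Filter.eventually_ge_atTop (range (2*d+2))] with s hs
    have hsub := Finset.prod_sdiff (f := g) hs
    rw [← hsub]
    have hu : X^(d+1) ∣ (∏ i ∈ s \ range (2*d+2), g i) - 1 := by
      apply prod_sub_one
      intro i hi
      have hi' : i ∉ range (2*d+2) := (Finset.mem_sdiff.mp hi).2
      rw [Finset.mem_range] at hi'
      exact g_sub_one (by omega)
    have : coeff d ((∏ i ∈ s \ range (2*d+2), g i) * ∏ i ∈ range (2*d+2), g i)
        = coeff d (∏ i ∈ range (2*d+2), g i) := by
      apply coeff_eq_of_sub_dvd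
      have e : (∏ i ∈ s \ range (2*d+2), g i) * ∏ i ∈ range (2*d+2), g i
          - ∏ i ∈ range (2*d+2), g i
          = ((∏ i ∈ s \ range (2*d+2), g i) - 1) * ∏ i ∈ range (2*d+2), g i := by ring
      rw [e]
      exact hu.mul_right _
    rw [this]
    have hform : ∀ i ∈ range (2*d+2), g i
        = (1 - (X:PowerSeries ℚ)^(4*i+1)) * (1 - X^(4*i+3)) * (1 - X^(4*(i+1))) := by
      intro i _
      have e1 : 4*(i+1)-3 = 4*i+1 := by omega
      have e2 : 4*(i+1)-1 = 4*i+3 := by omega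
      simp only [hg, e1, e2]
    rw [Finset.prod_congr rfl hform, coeff_partial d (2*d+2) (le_refl _), TT, coeff_mk]
  exact Filter.Tendsto.congr' (hev.mono fun s h => h.symm) tendsto_const_nhds

theorem hexagonal_series_eq_product :
    (∑' m : ℤ, PowerSeries.C ((-1 : ℚ) ^ m) *
        (X : PowerSeries ℚ) ^ (m * (2 * m - 1)).toNat) =
      ∏' i : ℕ, ((1 - (X : PowerSeries ℚ) ^ (4 * (i + 1) - 3)) *
        (1 - (X : PowerSeries ℚ) ^ (4 * (i + 1) - 1)) *
        (1 - (X : PowerSeries ℚ) ^ (4 * (i + 1)))) := by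
  rw [hasSum_TT.tsum_eq, hasProd_TT.tprod_eq]
end
end

section
/- If a positive integer n is not of the form m(2m-1) for any integer m, then ∑_{j≥0} σ̄(n - h_{2j}) = ∑_{j≥0} σ̄(n - h_{2j+1}), where h_m = m(2m-1) indexed over all integers m (so h_{2j} ranges over even-index and h_{2j+1} over odd-index hexagonal numbers), and σ̄(k) = 0 for k ≤ 0. -/
open Polynomial Finset

noncomputable def qb : ℕ → ℤ → Polynomial ℤ
  | 0 => fun k => if k = 0 then 1 else 0
  | (n+1) => fun k => qb n (k-1) + X ^ (4*k).toNat * qb n k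

lemma qb_zero (k : ℤ) : qb 0 k = if k = 0 then 1 else 0 := rfl

lemma qb_succ (n : ℕ) (k : ℤ) : qb (n+1) k = qb n (k-1) + X ^ (4*k).toNat * qb n k := rfl

lemma qb_neg (n : ℕ) (k : ℤ) (h : k < 0) : qb n k = 0 := by
  induction n generalizing k with
  | zero => simp [qb_zero]; omega
  | succ n ih => rw [qb_succ, ih _ (by omega), ih _ h]; ring

lemma qb_gt (n : ℕ) (k : ℤ) (h : (n:ℤ) < k) : qb n k = 0 := by
  induction n generalizing k with
  | zero => simp [qb_zero]; omega
  | succ n ih => rw [qb_succ, ih _ (by push_cast at h ⊢; omega), ih _ (by push_cast at h ⊢; omega)]; ring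

lemma qb_k_zero (n : ℕ) : qb n 0 = 1 := by
  induction n with
  | zero => simp [qb_zero]
  | succ n ih => rw [qb_succ, qb_neg _ _ (by omega), ih]; simp

lemma qb_top (n : ℕ) : qb n n = 1 := by
  induction n with
  | zero => simp [qb_zero]
  | succ n ih =>
      rw [qb_succ]
      push_cast
      rw [show (n:ℤ)+1-1 = (n:ℤ) by ring, ih, qb_gt n ((n:ℤ)+1) (by omega)]
      ring

lemma qb_pascal2 (n : ℕ) (k : ℤ) :
    qb (n+1) k = X ^ (4*((n:ℤ)+1-k)).toNat * qb n (k-1) + qb n k := by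
  induction n generalizing k with
  | zero =>
      rw [qb_succ]
      by_cases h0 : k = 0
      · subst h0; simp [qb_zero]
      by_cases h1 : k = 1
      · subst h1; simp [qb_zero]
      · simp [qb_zero, h0, h1, show ¬ (k - 1 = 0) by omega]
  | succ n ih =>
      by_cases hk : 1 ≤ k ∧ k ≤ (n:ℤ) + 1
      · have hpow1 : X ^ (4*k).toNat * X ^ (4*((n:ℤ)+1-k)).toNat = (X:Polynomial ℤ) ^ (4*(n+1)) := by
          rw [← pow_add]; congr 1; omega
        have hpow2 : X ^ (4*((n:ℤ)+2-k)).toNat * X ^ (4*(k-1)).toNat = (X:Polynomial ℤ) ^ (4*(n+1)) := by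
          rw [← pow_add]; congr 1; omega
        have E1 : qb (n+1) k = qb n (k-1) + X ^ (4*k).toNat * qb n k := qb_succ n k
        have E2 : qb (n+1) k = X ^ (4*((n:ℤ)+1-k)).toNat * qb n (k-1) + qb n k := ih k
        have E3 : qb (n+1) (k-1) = qb n (k-1-1) + X ^ (4*(k-1)).toNat * qb n (k-1) := qb_succ n (k-1)
        have E4 : qb (n+1) (k-1) = X ^ (4*((n:ℤ)+1-(k-1))).toNat * qb n (k-1-1) + qb n (k-1) := ih (k-1)
        have hgoal : qb (n+1+1) k = qb (n+1) (k-1) + X ^ (4*k).toNat * qb (n+1) k := qb_succ (n+1) k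
        rw [hgoal]
        have key : qb (n+1) (k-1) + X ^ (4*(n+1)) * qb n (k-1)
            = X ^ (4*((n:ℤ)+1+1-k)).toNat * qb (n+1) (k-1) + qb n (k-1) := by
          calc qb (n+1) (k-1) + X ^ (4*(n+1)) * qb n (k-1)
              = qb (n+1) (k-1) + (X ^ (4*((n:ℤ)+2-k)).toNat * X ^ (4*(k-1)).toNat) * qb n (k-1) := by
                rw [hpow2]
            _ = qb (n+1) (k-1) + X ^ (4*((n:ℤ)+2-k)).toNat * (X ^ (4*(k-1)).toNat * qb n (k-1)) := by ring
            _ = qb (n+1) (k-1) + X ^ (4*((n:ℤ)+2-k)).toNat * (qb (n+1) (k-1) - qb n (k-1-1)) := by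
                rw [E3]; ring
            _ = X ^ (4*((n:ℤ)+1+1-k)).toNat * qb (n+1) (k-1) + qb n (k-1) := by
                have h4 : X ^ (4*((n:ℤ)+2-k)).toNat * qb n (k-1-1)
                    = qb (n+1) (k-1) - qb n (k-1) := by
                  rw [E4, show (n:ℤ)+1-(k-1) = (n:ℤ)+2-k by ring]; ring
                rw [show (n:ℤ)+1+1-k = (n:ℤ)+2-k by ring]
                linear_combination - h4
        calc qb (n+1) (k-1) + X ^ (4*k).toNat * qb (n+1) k
            = qb (n+1) (k-1) + X ^ (4*k).toNat * (X ^ (4*((n:ℤ)+1-k)).toNat * qb n (k-1) + qb n k) := by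
              rw [← E2]
          _ = qb (n+1) (k-1) + X ^ (4*(n+1)) * qb n (k-1) + X ^ (4*k).toNat * qb n k := by
              rw [← hpow1]; ring
          _ = X ^ (4*((n:ℤ)+1+1-k)).toNat * qb (n+1) (k-1) + qb n (k-1) + X ^ (4*k).toNat * qb n k := by
              rw [key]
          _ = X ^ (4*((n:ℤ)+1+1-k)).toNat * qb (n+1) (k-1) + qb (n+1) k := by
              rw [E1]; ring
      · push_neg at hk
        rcases le_or_gt k 0 with hk0 | hk1
        · rcases eq_or_lt_of_le hk0 with rfl | hneg
          · have hn1 : qb (n+1) ((0:ℤ)-1) = 0 := qb_neg _ _ (by omega)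
            rw [qb_succ, qb_k_zero, hn1]; simp
          · have hn1 : qb (n+1) (k-1) = 0 := qb_neg _ _ (by omega)
            have hn2 : qb (n+1) k = 0 := qb_neg _ _ hneg
            rw [qb_succ, hn1, hn2]; simp
        · have hk2 : (n:ℤ) + 1 < k := hk hk1
          rcases eq_or_lt_of_le (show (n:ℤ)+2 ≤ k by omega) with heq | hlt
          · have hk' : k = (n:ℤ) + 2 := heq.symm
            subst hk'
            have g1 : qb (n+1+1) ((n:ℤ)+2) = 1 := by
              rw [show (n:ℤ)+2 = ((n+2:ℕ):ℤ) by push_cast; ring]; exact qb_top (n+2)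
            have g2 : qb (n+1) ((n:ℤ)+2-1) = 1 := by
              rw [show (n:ℤ)+2-1 = ((n+1:ℕ):ℤ) by push_cast; ring]; exact qb_top (n+1)
            have g3 : qb (n+1) ((n:ℤ)+2) = 0 := qb_gt (n+1) _ (by push_cast; omega)
            push_cast
            rw [g1, g2, g3, show (4*((n:ℤ)+1+1-((n:ℤ)+2))).toNat = 0 by omega]
            simp
          · rw [qb_gt (n+2) _ (by push_cast; omega), qb_gt (n+1) _ (by push_cast; omega),
              qb_gt (n+1) _ (by push_cast; omega)]
            ring

lemma qb_symm (n : ℕ) (k : ℤ) : qb n k = qb n ((n:ℤ) - k) := by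
  induction n generalizing k with
  | zero =>
      rw [qb_zero, qb_zero]
      by_cases h : k = 0
      · simp [h]
      · rw [if_neg h, if_neg (by push_cast; omega)]
  | succ n ih =>
      rw [qb_succ]
      push_cast
      rw [qb_pascal2 n ((n:ℤ)+1-k)]
      rw [show (n:ℤ) + 1 - ((n:ℤ) + 1 - k) = k by ring,
        show (n:ℤ) + 1 - k - 1 = (n:ℤ) - k by ring,
        ← ih k]
      rw [show (n:ℤ)+1-k = (n:ℤ)-(k-1) by ring, ← ih (k-1)]
      ring

lemma qb_mul_prod (n : ℕ) : ∀ k : ℕ, k ≤ n →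
    qb n k * ∏ i ∈ Icc 1 k, (1 - (X:Polynomial ℤ)^(4*i))
      = ∏ i ∈ Icc (n-k+1) n, (1 - (X:Polynomial ℤ)^(4*i)) := by
  induction n with
  | zero =>
      intro k hk
      interval_cases k
      show qb 0 ((0:ℕ):ℤ) * _ = _
      norm_num [qb_k_zero]
      
  | succ n ih =>
      intro k hk
      cases k with
      | zero =>
          show qb (n+1) ((0:ℕ):ℤ) * _ = _
          norm_num [qb_k_zero]
      | succ k =>
          have hq : qb (n+1) ((k+1:ℕ):ℤ) = qb n k + X^(4*(k+1)) * qb n ((k+1:ℕ):ℤ) := by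
            rw [qb_succ, show ((k+1:ℕ):ℤ) - 1 = (k:ℤ) by push_cast; ring,
              show (4*((k+1:ℕ):ℤ)).toNat = 4*(k+1) by push_cast; omega]
          have hsplit : ∏ i ∈ Icc 1 (k+1), (1 - (X:Polynomial ℤ)^(4*i))
              = (∏ i ∈ Icc 1 k, (1 - (X:Polynomial ℤ)^(4*i))) * (1 - X^(4*(k+1))) := by
            rw [← Finset.prod_Icc_succ_top (by omega)]
          rcases Nat.lt_or_ge k n with hlt | hge
          · have hins : ∏ i ∈ Icc (n-k) n, (1 - (X:Polynomial ℤ)^(4*i))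
                = (1 - X^(4*(n-k))) * ∏ i ∈ Icc (n-k+1) n, (1 - (X:Polynomial ℤ)^(4*i)) := by
              rw [show Icc (n-k) n = insert (n-k) (Icc (n-k+1) n) by
                    ext x; simp only [Finset.mem_Icc, Finset.mem_insert]; omega,
                Finset.prod_insert (by simp only [Finset.mem_Icc]; omega)]
            have hR : ∏ i ∈ Icc (n+1-(k+1)+1) (n+1), (1 - (X:Polynomial ℤ)^(4*i))
                = (∏ i ∈ Icc (n-k+1) n, (1 - (X:Polynomial ℤ)^(4*i))) * (1 - X^(4*(n+1))) := by
              rw [show n+1-(k+1)+1 = n-k+1 by omega, ← Finset.prod_Icc_succ_top (by omega)]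
            rw [hq, hsplit, hR]
            have ih1 := ih k (by omega)
            have ih2 := ih (k+1) (by omega)
            rw [show n-(k+1)+1 = n-k by omega] at ih2
            rw [hsplit] at ih2
            calc (qb n ↑k + X ^ (4 * (k + 1)) * qb n ((k+1:ℕ):ℤ)) *
                  ((∏ i ∈ Icc 1 k, (1 - (X:Polynomial ℤ) ^ (4 * i))) * (1 - X ^ (4 * (k + 1))))
                = (qb n ↑k * ∏ i ∈ Icc 1 k, (1 - X ^ (4 * i))) * (1 - X ^ (4 * (k + 1)))
                  + X ^ (4 * (k + 1)) * (qb n ((k+1:ℕ):ℤ) *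
                      ((∏ i ∈ Icc 1 k, (1 - X ^ (4 * i))) * (1 - X ^ (4 * (k + 1))))) := by ring
              _ = (∏ i ∈ Icc (n-k+1) n, (1 - X ^ (4*i))) * (1 - X ^ (4 * (k + 1)))
                  + X ^ (4 * (k + 1)) * ((1 - X^(4*(n-k))) * ∏ i ∈ Icc (n-k+1) n, (1 - X ^ (4*i))) := by
                  rw [ih1, ih2, hins]
              _ = (∏ i ∈ Icc (n-k+1) n, (1 - X ^ (4*i))) *
                    (1 - X ^ (4*(k+1)) * X^(4*(n-k))) := by ring
              _ = (∏ i ∈ Icc (n-k+1) n, (1 - X ^ (4*i))) * (1 - X ^ (4*(n+1))) := by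
                  rw [← pow_add, show 4*(k+1) + 4*(n-k) = 4*(n+1) by omega]
          · have h1 : qb (n+1) ((k+1:ℕ):ℤ) = 1 := by
              rw [show ((k+1:ℕ):ℤ) = ((n+1:ℕ):ℤ) by push_cast; omega]
              exact qb_top (n+1)
            rw [h1, one_mul, show n+1-(k+1)+1 = 1 by omega, show k+1 = n+1 by omega]

lemma lowcoeff (s : Finset ℕ) (I : ℕ) (hs : ∀ i ∈ s, I ≤ i) (t : ℕ) (ht : t < 4*I) :
    (∏ i ∈ s, (1 - (X:Polynomial ℤ)^(4*i))).coeff t = if t = 0 then 1 else 0 := by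
  induction s using Finset.induction with
  | empty => simp [Polynomial.coeff_one]
  | insert a s' hnotmem ih' =>
      rw [Finset.prod_insert hnotmem, sub_mul, one_mul, Polynomial.coeff_sub,
        mul_comm ((X:Polynomial ℤ)^(4*a)), Polynomial.coeff_mul_X_pow']
      rw [if_neg (by have := hs a (Finset.mem_insert_self a s'); omega)]
      rw [ih' (fun i hi => hs i (Finset.mem_insert_of_mem hi))]
      ring

def hexZ (m : ℤ) : ℤ := m * (2*m - 1)

lemma hexZ_nonneg (m : ℤ) : 0 ≤ hexZ m := by
  unfold hexZ; rcases le_or_gt m 0 with h | h <;> nlinarith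

lemma hexZ_ge_sq (m : ℤ) : m^2 ≤ hexZ m := by unfold hexZ; nlinarith [sq_nonneg m]

def hexN (m : ℤ) : ℕ := (hexZ m).toNat

def sg (m : ℤ) : ℤ := if Even m then 1 else -1

lemma sg_sub_one (m : ℤ) : sg (m-1) = - sg m := by
  unfold sg
  by_cases h : Even m
  · rw [if_pos h, if_neg (by rw [Int.even_sub_one]; exact not_not_intro h)]
  · rw [if_neg h, if_pos (Int.even_sub_one.mpr h)]; ring

lemma sg_add_one (m : ℤ) : sg (m+1) = - sg m := by
  unfold sg
  by_cases h : Even m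
  · rw [if_pos h, if_neg (by rw [Int.even_add_one]; exact not_not_intro h)]
  · rw [if_neg h, if_pos (Int.even_add_one.mpr h)]; ring

lemma hexZ_sub_one (m : ℤ) : hexZ (m-1) = hexZ m - 4*m + 3 := by unfold hexZ; ring
lemma hexZ_add_one (m : ℤ) : hexZ (m+1) = hexZ m + 4*m + 1 := by unfold hexZ; ring

/-- generic re-ranging of sums of functions vanishing outside [-K,K] -/
lemma sum_ext_g (K : ℕ) (g : ℤ → Polynomial ℤ)
    (hg : ∀ m : ℤ, ((K:ℤ) < m ∨ m < -(K:ℤ)) → g m = 0)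
    (a b : ℤ) (ha : a ≤ -(K:ℤ)) (hb : (K:ℤ) ≤ b) :
    ∑ m ∈ Icc a b, g m = ∑ m ∈ Icc (-(K:ℤ)) K, g m := by
  refine (Finset.sum_subset (Finset.Icc_subset_Icc ha hb) ?_).symm
  intro x hx hnx
  simp only [Finset.mem_Icc] at hx hnx
  exact hg x (by omega)

lemma sum_shift_sub (K : ℕ) (g : ℤ → Polynomial ℤ)
    (hg : ∀ m : ℤ, ((K:ℤ) < m ∨ m < -(K:ℤ)) → g m = 0) :
    ∑ m ∈ Icc (-(K:ℤ)-2) ((K:ℤ)+2), g (m-1) = ∑ m ∈ Icc (-(K:ℤ)-2) ((K:ℤ)+2), g m := by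
  have h1 : ∑ m ∈ Icc (-(K:ℤ)-3) ((K:ℤ)+1), g m
      = ∑ m ∈ Icc (-(K:ℤ)-2) ((K:ℤ)+2), g (m-1) := by
    rw [show Icc (-(K:ℤ)-2) ((K:ℤ)+2) = (Icc (-(K:ℤ)-3) ((K:ℤ)+1)).map (addRightEmbedding 1) by
        rw [Finset.map_add_right_Icc]; congr 1 <;> ring,
      Finset.sum_map]
    apply Finset.sum_congr rfl
    intro x _; simp [addRightEmbedding_apply]
  rw [← h1, sum_ext_g K g hg _ _ (by omega) (by omega),
    sum_ext_g K g hg (-(K:ℤ)-2) ((K:ℤ)+2) (by omega) (by omega)]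

lemma sum_shift_add (K : ℕ) (g : ℤ → Polynomial ℤ)
    (hg : ∀ m : ℤ, ((K:ℤ) < m ∨ m < -(K:ℤ)) → g m = 0) :
    ∑ m ∈ Icc (-(K:ℤ)-2) ((K:ℤ)+2), g (m+1) = ∑ m ∈ Icc (-(K:ℤ)-2) ((K:ℤ)+2), g m := by
  have h1 : ∑ m ∈ Icc (-(K:ℤ)-1) ((K:ℤ)+3), g m
      = ∑ m ∈ Icc (-(K:ℤ)-2) ((K:ℤ)+2), g (m+1) := by
    rw [show Icc (-(K:ℤ)-2) ((K:ℤ)+2) = (Icc (-(K:ℤ)-1) ((K:ℤ)+3)).map (addRightEmbedding (-1)) by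
        rw [Finset.map_add_right_Icc]; congr 1 <;> ring,
      Finset.sum_map]
    apply Finset.sum_congr rfl
    intro x _; simp [addRightEmbedding_apply]
  rw [← h1, sum_ext_g K g hg _ _ (by omega) (by omega),
    sum_ext_g K g hg (-(K:ℤ)-2) ((K:ℤ)+2) (by omega) (by omega)]

lemma qb_dp (n : ℕ) (k : ℤ) :
    qb (n+2) k = qb n (k-1) + X^((4*((n:ℤ)+2-k)).toNat) * qb n (k-2)
      + X^((4*k).toNat) * qb n k + X^(4*(n+1)) * qb n (k-1) := by
  have h1 : qb (n+2) k = qb (n+1) (k-1) + X^((4*k).toNat) * qb (n+1) k := qb_succ (n+1) k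
  have h2 : qb (n+1) (k-1) = X^((4*((n:ℤ)+2-k)).toNat) * qb n (k-2) + qb n (k-1) := by
    have h := qb_pascal2 n (k-1)
    rwa [show (n:ℤ)+1-(k-1) = (n:ℤ)+2-k by ring, show k-1-1 = k-2 by ring] at h
  have h3 : qb (n+1) k = X^((4*((n:ℤ)+1-k)).toNat) * qb n (k-1) + qb n k := qb_pascal2 n k
  rw [h1, h2, h3]
  by_cases hk : 0 ≤ k ∧ k ≤ (n:ℤ)+1
  · rw [mul_add, ← mul_assoc, ← pow_add,
      show (4*k).toNat + (4*((n:ℤ)+1-k)).toNat = 4*(n+1) by omega]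
    ring
  · have hz : qb n (k-1) = 0 := by
      rcases (not_and_or.mp hk) with h | h
      · exact qb_neg _ _ (by omega)
      · exact qb_gt _ _ (by push_cast at h ⊢; omega)
    rw [hz]
    ring

lemma jtp_fin (K : ℕ) :
    ∏ k ∈ Icc 1 K, ((1 - (X:Polynomial ℤ)^(4*k-3)) * (1 - X^(4*k-1)))
      = ∑ m ∈ Icc (-(K:ℤ)) K, C (sg m) * X^(hexN m) * qb (2*K) ((K:ℤ) + m) := by
  induction K with
  | zero =>
      simp only [Nat.cast_zero, neg_zero, Finset.Icc_self, Finset.sum_singleton]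
      rw [show Icc 1 0 = (∅ : Finset ℕ) by rfl, Finset.prod_empty]
      rw [show qb (2*0) ((0:ℤ)+0) = qb 0 0 by norm_num, qb_k_zero]
      unfold sg hexN hexZ
      norm_num
  | succ K ih =>
      -- notation
      set t : ℤ → Polynomial ℤ := fun m => C (sg m) * X^(hexN m) * qb (2*K) ((K:ℤ) + m) with ht
      have hvan : ∀ m : ℤ, ((K:ℤ) < m ∨ m < -(K:ℤ)) → t m = 0 := by
        intro m hm
        rcases hm with h | h
        · simp only [ht]; rw [qb_gt (2*K) ((K:ℤ)+m) (by push_cast; omega), mul_zero]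
        · simp only [ht]; rw [qb_neg (2*K) ((K:ℤ)+m) (by omega), mul_zero]
      have hprod : ∏ k ∈ Icc 1 (K+1), ((1 - (X:Polynomial ℤ)^(4*k-3)) * (1 - X^(4*k-1)))
          = (∑ m ∈ Icc (-(K:ℤ)-2) ((K:ℤ)+2), t m)
            * ((1 - X^(4*(K+1)-3)) * (1 - X^(4*(K+1)-1))) := by
        rw [Finset.prod_Icc_succ_top (by omega), ih,
          sum_ext_g K t hvan (-(K:ℤ)-2) ((K:ℤ)+2) (by omega) (by omega)]
      rw [hprod]
      have hexp : (1 - (X:Polynomial ℤ)^(4*(K+1)-3)) * (1 - X^(4*(K+1)-1))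
          = 1 - X^(4*K+1) - X^(4*K+3) + X^(8*K+4) := by
        rw [show 4*(K+1)-3 = 4*K+1 by omega, show 4*(K+1)-1 = 4*K+3 by omega]
        have hmul : (X:Polynomial ℤ)^(4*K+1) * X^(4*K+3) = X^(8*K+4) := by
          rw [← pow_add]; congr 1; omega
        calc (1 - (X:Polynomial ℤ)^(4*K+1)) * (1 - X^(4*K+3))
            = 1 - X^(4*K+1) - X^(4*K+3) + X^(4*K+1) * X^(4*K+3) := by ring
          _ = 1 - X^(4*K+1) - X^(4*K+3) + X^(8*K+4) := by rw [hmul]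
      rw [hexp]
      have hdistr : (∑ m ∈ Icc (-(K:ℤ)-2) ((K:ℤ)+2), t m)
            * (1 - X^(4*K+1) - X^(4*K+3) + X^(8*K+4))
          = (∑ m ∈ Icc (-(K:ℤ)-2) ((K:ℤ)+2), t m)
            - (∑ m ∈ Icc (-(K:ℤ)-2) ((K:ℤ)+2), t (m-1)) * X^(4*K+1)
            - (∑ m ∈ Icc (-(K:ℤ)-2) ((K:ℤ)+2), t (m+1)) * X^(4*K+3)
            + (∑ m ∈ Icc (-(K:ℤ)-2) ((K:ℤ)+2), t m) * X^(8*K+4) := by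
        rw [sum_shift_sub K t hvan, sum_shift_add K t hvan]
        ring
      rw [hdistr, Finset.sum_mul, Finset.sum_mul, Finset.sum_mul, ← Finset.sum_sub_distrib,
        ← Finset.sum_sub_distrib, ← Finset.sum_add_distrib]
      -- extend RHS range
      have hvan' : ∀ m : ℤ, (((K+1:ℕ):ℤ) < m ∨ m < -((K+1:ℕ):ℤ)) →
          C (sg m) * X^(hexN m) * qb (2*(K+1)) (((K+1:ℕ):ℤ) + m) = 0 := by
        intro m hm
        rcases hm with h | h
        · rw [qb_gt (2*(K+1)) _ (by push_cast at h ⊢; omega), mul_zero]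
        · rw [qb_neg (2*(K+1)) _ (by push_cast at h ⊢; omega), mul_zero]
      have hrhs : ∑ m ∈ Icc (-((K+1:ℕ):ℤ)) ((K+1:ℕ):ℤ),
            C (sg m) * X^(hexN m) * qb (2*(K+1)) (((K+1:ℕ):ℤ) + m)
          = ∑ m ∈ Icc (-(K:ℤ)-2) ((K:ℤ)+2),
            C (sg m) * X^(hexN m) * qb (2*(K+1)) (((K+1:ℕ):ℤ) + m) :=
        (sum_ext_g (K+1) _ hvan' (-(K:ℤ)-2) ((K:ℤ)+2) (by push_cast; omega)
          (by push_cast; omega)).symm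
      rw [hrhs]
      apply Finset.sum_congr rfl
      intro m hm
      simp only [Finset.mem_Icc] at hm
      -- pointwise identity
      have hq : qb (2*(K+1)) (((K+1:ℕ):ℤ) + m)
          = qb (2*K) ((K:ℤ)+m) + X^((4*((K:ℤ)+1-m)).toNat) * qb (2*K) ((K:ℤ)+m-1)
            + X^((4*((K:ℤ)+1+m)).toNat) * qb (2*K) ((K:ℤ)+1+m)
            + X^(4*(2*K+1)) * qb (2*K) ((K:ℤ)+m) := by
        have h := qb_dp (2*K) ((K:ℤ)+1+m)
        rw [show 2*K+2 = 2*(K+1) by ring] at h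
        rw [show (((K+1:ℕ)):ℤ) + m = (K:ℤ)+1+m by push_cast; ring, h]
        rw [show (K:ℤ)+1+m-1 = (K:ℤ)+m by ring, show (K:ℤ)+1+m-2 = (K:ℤ)+m-1 by ring,
          show (4*(((2*K:ℕ):ℤ)+2-((K:ℤ)+1+m))).toNat = (4*((K:ℤ)+1-m)).toNat by push_cast; omega]
      rw [hq]
      -- expand t
      have hT2 : C (sg m) * X^(hexN m) * (X^((4*((K:ℤ)+1-m)).toNat) * qb (2*K) ((K:ℤ)+m-1))
          = -(t (m-1) * X^(4*K+1)) := by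
        by_cases hm2 : m ≤ (K:ℤ)+1
        · have he : hexN m + (4*((K:ℤ)+1-m)).toNat = hexN (m-1) + (4*K+1) := by
            have h1 := hexZ_nonneg m
            have h2 := hexZ_nonneg (m-1)
            have h3 := hexZ_sub_one m
            unfold hexN
            omega
          simp only [ht]
          rw [show (K:ℤ) + (m-1) = (K:ℤ)+m-1 by ring, sg_sub_one, map_neg]
          calc C (sg m) * X^(hexN m) * (X^((4*((K:ℤ)+1-m)).toNat) * qb (2*K) ((K:ℤ)+m-1))
              = C (sg m) * (X^(hexN m) * X^((4*((K:ℤ)+1-m)).toNat)) * qb (2*K) ((K:ℤ)+m-1) := by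
                ring
            _ = C (sg m) * (X^(hexN (m-1)) * X^(4*K+1)) * qb (2*K) ((K:ℤ)+m-1) := by
                rw [← pow_add, ← pow_add, he]
            _ = -(-C (sg m) * X^(hexN (m-1)) * qb (2*K) ((K:ℤ)+m-1) * X^(4*K+1)) := by ring
        · have hz : qb (2*K) ((K:ℤ)+m-1) = 0 := qb_gt _ _ (by push_cast; omega)
          simp only [ht]
          rw [show (K:ℤ) + (m-1) = (K:ℤ)+m-1 by ring, hz]
          ring
      have hT3 : C (sg m) * X^(hexN m) * (X^((4*((K:ℤ)+1+m)).toNat) * qb (2*K) ((K:ℤ)+1+m))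
          = -(t (m+1) * X^(4*K+3)) := by
        by_cases hm3 : -(K:ℤ)-1 ≤ m
        · have he : hexN m + (4*((K:ℤ)+1+m)).toNat = hexN (m+1) + (4*K+3) := by
            have h1 := hexZ_nonneg m
            have h2 := hexZ_nonneg (m+1)
            have h3 := hexZ_add_one m
            unfold hexN
            omega
          simp only [ht]
          rw [show (K:ℤ) + (m+1) = (K:ℤ)+1+m by ring, sg_add_one, map_neg]
          calc C (sg m) * X^(hexN m) * (X^((4*((K:ℤ)+1+m)).toNat) * qb (2*K) ((K:ℤ)+1+m))
              = C (sg m) * (X^(hexN m) * X^((4*((K:ℤ)+1+m)).toNat)) * qb (2*K) ((K:ℤ)+1+m) := by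
                ring
            _ = C (sg m) * (X^(hexN (m+1)) * X^(4*K+3)) * qb (2*K) ((K:ℤ)+1+m) := by
                rw [← pow_add, ← pow_add, he]
            _ = -(-C (sg m) * X^(hexN (m+1)) * qb (2*K) ((K:ℤ)+1+m) * X^(4*K+3)) := by ring
        · have hz : qb (2*K) ((K:ℤ)+1+m) = 0 := qb_neg _ _ (by omega)
          simp only [ht]
          rw [show (K:ℤ) + (m+1) = (K:ℤ)+1+m by ring, hz]
          ring
      calc t m - t (m-1) * X^(4*K+1) - t (m+1) * X^(4*K+3) + t m * X^(8*K+4)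
          = t m + (-(t (m-1) * X^(4*K+1))) + (-(t (m+1) * X^(4*K+3))) + t m * X^(8*K+4) := by
            ring
        _ = C (sg m) * X^(hexN m) *
              (qb (2*K) ((K:ℤ)+m) + X^((4*((K:ℤ)+1-m)).toNat) * qb (2*K) ((K:ℤ)+m-1)
                + X^((4*((K:ℤ)+1+m)).toNat) * qb (2*K) ((K:ℤ)+1+m)
                + X^(4*(2*K+1)) * qb (2*K) ((K:ℤ)+m)) := by
            rw [mul_add, mul_add, mul_add, ← hT2, ← hT3]
            simp only [ht]
            rw [show 4*(2*K+1) = 8*K+4 by ring]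
            ring

def thf (j : ℕ) : ℤ → ℤ := fun m => if hexZ m = (j:ℤ) then sg m else 0

noncomputable def thc (j : ℕ) : ℤ := ∑ m ∈ Icc (-(j:ℤ)) (j:ℤ), thf j m

lemma abs_le_of_hex {m : ℤ} {j : ℕ} (h : hexZ m = (j:ℤ)) : -(j:ℤ) ≤ m ∧ m ≤ (j:ℤ) := by
  have h1 := hexZ_ge_sq m
  have h2 : m ≤ m^2 := by rcases le_or_gt m 0 with h' | h' <;> nlinarith
  have h3 : -m ≤ m^2 := by rcases le_or_gt m 0 with h' | h' <;> nlinarith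
  omega

lemma thf_support {j : ℕ} {m : ℤ} (h : m ∉ Icc (-(j:ℤ)) (j:ℤ)) : thf j m = 0 := by
  unfold thf
  rw [if_neg]
  intro hc
  exact h (Finset.mem_Icc.mpr (abs_le_of_hex hc))

lemma thc_eq_sum (j : ℕ) (a b : ℤ) (ha : a ≤ -(j:ℤ)) (hb : (j:ℤ) ≤ b) :
    ∑ m ∈ Icc a b, thf j m = thc j := by
  unfold thc
  refine (Finset.sum_subset (Finset.Icc_subset_Icc ha hb) ?_).symm
  intro x _ hnx
  exact thf_support hnx

lemma hexZ_inj {m m' : ℤ} (h : hexZ m = hexZ m') : m = m' := by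
  unfold hexZ at h
  have h2 : (m - m') * (2*(m + m') - 1) = 0 := by ring_nf; linarith [h]
  rcases mul_eq_zero.mp h2 with h3 | h3
  · omega
  · omega

lemma thc_spec1 {j : ℕ} {m : ℤ} (h : hexZ m = (j:ℤ)) : thc j = sg m := by
  unfold thc
  rw [Finset.sum_eq_single m]
  · unfold thf; rw [if_pos h]
  · intro b _ hb
    unfold thf
    rw [if_neg]
    intro hc
    exact hb (hexZ_inj (hc.trans h.symm))
  · intro hc
    exact absurd (Finset.mem_Icc.mpr (abs_le_of_hex h)) hc

lemma thc_spec0 {j : ℕ} (h : ∀ m : ℤ, hexZ m ≠ (j:ℤ)) : thc j = 0 := by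
  unfold thc
  apply Finset.sum_eq_zero
  intro m _
  unfold thf
  rw [if_neg (h m)]

noncomputable def PP (K : ℕ) : Polynomial ℤ :=
  (∏ k ∈ Icc 1 K, ((1 - (X:Polynomial ℤ)^(4*k-3)) * (1 - X^(4*k-1))))
    * ∏ k ∈ Icc 1 K, (1 - (X:Polynomial ℤ)^(4*k))

/-- the key truncation estimate: `qb (2K) (K+m) * R ≡ 1` in low degrees -/
lemma qbR_coeff (K : ℕ) (m : ℤ) (hm : m^2 ≤ (K:ℤ)) (t : ℕ) (ht : t ≤ K) :
    (qb (2*K) ((K:ℤ)+m) * ∏ k ∈ Icc 1 K, (1 - (X:Polynomial ℤ)^(4*k))).coeff t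
      = if t = 0 then 1 else 0 := by
  set μ := m.natAbs with hμdef
  have hμsq : μ * μ ≤ K := by
    have : (μ:ℤ)*(μ:ℤ) ≤ (K:ℤ) := by
      rw [show ((μ:ℤ)) = |m| by simp [hμdef], ← abs_mul, abs_of_nonneg (by nlinarith [sq_nonneg m])]
      nlinarith
    exact_mod_cast this
  have hμK : μ ≤ K := by
    have : μ ≤ μ * μ ∨ μ = 0 := by
      rcases Nat.eq_zero_or_pos μ with h | h
      · right; exact h
      · left; exact Nat.le_mul_of_pos_left μ h
    omega
  set k₀ := K - μ with hk₀
  have hqs : qb (2*K) ((K:ℤ)+m) = qb (2*K) ((k₀:ℕ):ℤ) := by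
    rcases le_or_gt 0 m with h | h
    · rw [qb_symm (2*K) ((K:ℤ)+m)]
      congr 1
      push_cast
      omega
    · congr 1
      push_cast
      omega
  have hsplit : ∏ k ∈ Icc 1 K, (1 - (X:Polynomial ℤ)^(4*k))
      = (∏ k ∈ Icc 1 k₀, (1 - (X:Polynomial ℤ)^(4*k))) * ∏ k ∈ Icc (k₀+1) K, (1 - (X:Polynomial ℤ)^(4*k)) := by
    rw [← Finset.prod_union (by
      rw [Finset.disjoint_left]
      intro x hx hx'
      simp only [Finset.mem_Icc] at hx hx'
      omega)]
    apply Finset.prod_congr _ (fun _ _ => rfl)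
    ext x
    simp only [Finset.mem_union, Finset.mem_Icc]
    omega
  rw [hqs, hsplit, ← mul_assoc, qb_mul_prod (2*K) k₀ (by omega)]
  rw [← Finset.prod_union (by
    rw [Finset.disjoint_left]
    intro x hx hx'
    simp only [Finset.mem_Icc] at hx hx'
    omega)]
  apply lowcoeff _ (k₀+1)
  · intro i hi
    simp only [Finset.mem_union, Finset.mem_Icc] at hi
    omega
  · -- t < 4*(k₀+1)
    have h16 : 16*(μ*μ) ≤ 16*K := by omega
    have : 4*μ < 3*K+4 := by nlinarith
    omega

lemma PP_coeff (K : ℕ) (j : ℕ) (hj : j ≤ K) : (PP K).coeff j = thc j := by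
  unfold PP
  rw [jtp_fin K, Finset.sum_mul, Polynomial.finset_sum_coeff]
  rw [← thc_eq_sum j (-(K:ℤ)) (K:ℤ) (by omega) (by omega)]
  apply Finset.sum_congr rfl
  intro m hm
  simp only [Finset.mem_Icc] at hm
  rw [show C (sg m) * X^(hexN m) * qb (2*K) ((K:ℤ)+m) * (∏ k ∈ Icc 1 K, (1 - (X:Polynomial ℤ)^(4*k)))
      = C (sg m) * ((qb (2*K) ((K:ℤ)+m) * (∏ k ∈ Icc 1 K, (1 - (X:Polynomial ℤ)^(4*k)))) * X^(hexN m))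
      from by ring]
  rw [Polynomial.coeff_C_mul, Polynomial.coeff_mul_X_pow']
  unfold thf
  by_cases hle : hexN m ≤ j
  · rw [if_pos hle]
    have hsq : m^2 ≤ (K:ℤ) := by
      have h1 := hexZ_ge_sq m
      have h2 := hexZ_nonneg m
      have : hexZ m ≤ (j:ℤ) := by unfold hexN at hle; omega
      omega
    rw [qbR_coeff K m hsq (j - hexN m) (by omega)]
    have h2 := hexZ_nonneg m
    by_cases he : hexZ m = (j:ℤ)
    · rw [if_pos he, if_pos (by unfold hexN; omega)]
      ring
    · rw [if_neg he, if_neg (by unfold hexN at hle ⊢; omega), mul_zero]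
  · rw [if_neg hle, if_neg (by
      intro hc
      have := hexZ_nonneg m
      unfold hexN at hle
      omega), mul_zero]

def sbN (v : ℕ) : ℤ := ∑ d ∈ v.divisors.filter (fun d => d % 4 ≠ 2), (d:ℤ)

def AA (K : ℕ) : Finset ℕ :=
  ((Icc 1 K).image (fun k => 4*k-3)) ∪ ((Icc 1 K).image (fun k => 4*k-1))
    ∪ ((Icc 1 K).image (fun k => 4*k))

lemma AA_mem {K a : ℕ} (h : a ∈ AA K) : 1 ≤ a ∧ a ≤ 4*K ∧ a % 4 ≠ 2 := by
  unfold AA at h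
  simp only [Finset.mem_union, Finset.mem_image, Finset.mem_Icc] at h
  rcases h with (⟨k, hk, rfl⟩ | ⟨k, hk, rfl⟩) | ⟨k, hk, rfl⟩ <;> omega

lemma mem_AA {K d : ℕ} (h1 : 1 ≤ d) (h2 : d ≤ K) (h3 : d % 4 ≠ 2) : d ∈ AA K := by
  unfold AA
  simp only [Finset.mem_union, Finset.mem_image, Finset.mem_Icc]
  rcases (show d%4 = 0 ∨ d%4 = 1 ∨ d%4 = 3 by omega) with h | h | h
  · exact Or.inr ⟨d/4, by omega, by omega⟩
  · exact Or.inl (Or.inl ⟨(d+3)/4, by omega, by omega⟩)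
  · exact Or.inl (Or.inr ⟨(d+1)/4, by omega, by omega⟩)

lemma prod_AA (K : ℕ) : ∏ a ∈ AA K, (1 - (X:Polynomial ℤ)^a) = PP K := by
  unfold AA PP
  rw [Finset.prod_union (by
      rw [Finset.disjoint_left]
      intro x hx hx'
      simp only [Finset.mem_union, Finset.mem_image, Finset.mem_Icc] at hx hx'
      rcases hx with ⟨k, hk, rfl⟩ | ⟨k, hk, rfl⟩ <;> rcases hx' with ⟨k', hk', he⟩ <;> omega),
    Finset.prod_union (by
      rw [Finset.disjoint_left]
      intro x hx hx'
      simp only [Finset.mem_image, Finset.mem_Icc] at hx hx'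
      rcases hx with ⟨k, hk, rfl⟩
      rcases hx' with ⟨k', hk', he⟩
      omega)]
  rw [Finset.prod_image (by intro x hx y hy he; simp only [Finset.coe_Icc, Set.mem_Icc] at hx hy he; omega),
    Finset.prod_image (by intro x hx y hy he; simp only [Finset.coe_Icc, Set.mem_Icc] at hx hy he; omega),
    Finset.prod_image (by intro x hx y hy he; simp only [Finset.coe_Icc, Set.mem_Icc] at hx hy he; omega)]
  rw [← Finset.prod_mul_distrib]

noncomputable def gser (a K : ℕ) : Polynomial ℤ := ∑ i ∈ range (K+1), (X:Polynomial ℤ)^(a*i)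

lemma one_sub_mul_gser (a K : ℕ) :
    (1 - (X:Polynomial ℤ)^a) * gser a K = 1 - X^(a*(K+1)) := by
  have h := geom_sum_mul ((X:Polynomial ℤ)^a) (K+1)
  unfold gser
  have h2 : ∑ i ∈ range (K+1), ((X:Polynomial ℤ)^a)^i = ∑ i ∈ range (K+1), (X:Polynomial ℤ)^(a*i) := by
    apply Finset.sum_congr rfl
    intro i _
    rw [← pow_mul]
  rw [← h2, pow_mul]
  linear_combination -h

lemma gser_coeff (a K w : ℕ) (ha : 1 ≤ a) :
    (gser a K).coeff w = if a ∣ w ∧ w ≤ a*K then 1 else 0 := by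
  unfold gser
  rw [Polynomial.finset_sum_coeff]
  by_cases h : a ∣ w ∧ w ≤ a*K
  · obtain ⟨⟨c, rfl⟩, hle⟩ := h
    rw [Finset.sum_eq_single c]
    · rw [Polynomial.coeff_X_pow, if_pos rfl, if_pos ⟨⟨c, rfl⟩, hle⟩]
    · intro i _ hi
      rw [Polynomial.coeff_X_pow, if_neg (by
        intro hc
        exact hi (Nat.eq_of_mul_eq_mul_left (by omega) hc.symm))]
    · intro hc
      exfalso
      apply hc
      rw [Finset.mem_range]
      have : c ≤ K := Nat.le_of_mul_le_mul_left hle (by omega)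
      omega
  · rw [if_neg h]
    apply Finset.sum_eq_zero
    intro i hi
    rw [Finset.mem_range] at hi
    rw [Polynomial.coeff_X_pow, if_neg (by
      intro hc
      subst hc
      exact h ⟨⟨i, rfl⟩, by nlinarith⟩)]

noncomputable def SS (K : ℕ) : Polynomial ℤ := ∑ a ∈ AA K, C (a:ℤ) * X^a * gser a K

lemma SS_coeff (K v : ℕ) (hv : v ≤ K) : (SS K).coeff v = sbN v := by
  unfold SS
  rw [Polynomial.finset_sum_coeff]
  have hterm : ∀ a ∈ AA K, (C (a:ℤ) * X^a * gser a K).coeff v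
      = if a ∣ v ∧ a ≤ v then (a:ℤ) else 0 := by
    intro a ha
    have ha1 := (AA_mem ha).1
    rw [show C (a:ℤ) * X^a * gser a K = C (a:ℤ) * (gser a K * X^a) from by ring,
      Polynomial.coeff_C_mul, Polynomial.coeff_mul_X_pow']
    by_cases hle : a ≤ v
    · rw [if_pos hle, gser_coeff a K (v-a) ha1]
      by_cases hdvd : a ∣ v
      · rw [if_pos ⟨(Nat.dvd_sub hdvd dvd_rfl), by
            have : K ≤ a*K := Nat.le_mul_of_pos_left K (by omega)
            omega⟩, if_pos ⟨hdvd, hle⟩]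
        ring
      · rw [if_neg (by
          intro hc
          exact hdvd (by
            have := hc.1
            have h2 : a ∣ (v - a) + a := Nat.dvd_add this dvd_rfl
            rwa [Nat.sub_add_cancel hle] at h2)), if_neg (by tauto)]
        ring
    · rw [if_neg hle, if_neg (by tauto), mul_zero]
  rw [Finset.sum_congr rfl hterm, Finset.sum_ite, Finset.sum_const_zero, add_zero]
  unfold sbN
  apply Finset.sum_congr _ (fun _ _ => rfl)
  ext d
  simp only [Finset.mem_filter, Nat.mem_divisors]
  constructor
  · intro ⟨hd, hdvd, hdle⟩
    have := AA_mem hd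
    exact ⟨⟨hdvd, by omega⟩, this.2.2⟩
  · intro ⟨⟨hdvd, hv0⟩, hmod⟩
    have hdle : d ≤ v := Nat.le_of_dvd (by omega) hdvd
    have hd1 : 1 ≤ d := Nat.pos_of_dvd_of_pos hdvd (by omega)
    exact ⟨mem_AA hd1 (by omega) hmod, hdvd, hdle⟩

lemma derivative_finset_prod (s : Finset ℕ) (f : ℕ → Polynomial ℤ) :
    derivative (∏ i ∈ s, f i) = ∑ i ∈ s, (∏ j ∈ s.erase i, f j) * derivative (f i) := by
  rw [Finset.prod_eq_multiset_prod, Polynomial.derivative_prod]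
  rw [Finset.sum_eq_multiset_sum]
  congr 1

lemma key_poly (K : ℕ) (hK : 1 ≤ K) (h0 : thc K = 0) :
    ∑ jv ∈ antidiagonal K, thc jv.1 * sbN jv.2 = 0 := by
  set P : Polynomial ℤ := ∏ a ∈ AA K, (1 - (X:Polynomial ℤ)^a) with hP
  -- derivative identity
  have hder : X * derivative P = - ∑ a ∈ AA K, C ((a:ℕ):ℤ) * X^a * ∏ b ∈ (AA K).erase a, (1 - (X:Polynomial ℤ)^b) := by
    rw [hP, derivative_finset_prod, Finset.mul_sum, ← Finset.sum_neg_distrib]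
    apply Finset.sum_congr rfl
    intro a ha
    have ha1 := (AA_mem ha).1
    have hda : derivative (1 - (X:Polynomial ℤ)^a) = - (C ((a:ℕ):ℤ) * X^(a-1)) := by
      rw [derivative_sub, derivative_one, Polynomial.derivative_X_pow]
      simp
    rw [hda]
    rw [show X * ((∏ b ∈ (AA K).erase a, (1 - (X:Polynomial ℤ)^b)) * -(C ((a:ℕ):ℤ) * X^(a-1)))
        = -(C ((a:ℕ):ℤ) * (X * X^(a-1)) * ∏ b ∈ (AA K).erase a, (1 - (X:Polynomial ℤ)^b)) from by ring]
    rw [← pow_succ', show a-1+1 = a by omega]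
  -- product-with-S identity
  have hPS : P * SS K = (- (X * derivative P))
      - ∑ a ∈ AA K, C ((a:ℕ):ℤ) * X^(a*(K+2)) * ∏ b ∈ (AA K).erase a, (1 - (X:Polynomial ℤ)^b) := by
    rw [hder, neg_neg]
    unfold SS
    rw [Finset.mul_sum, ← Finset.sum_sub_distrib]
    apply Finset.sum_congr rfl
    intro a ha
    have hea : (1 - (X:Polynomial ℤ)^a) * ∏ b ∈ (AA K).erase a, (1 - (X:Polynomial ℤ)^b) = P :=
      Finset.mul_prod_erase (AA K) (fun b => 1 - (X:Polynomial ℤ)^b) ha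
    calc P * (C ((a:ℕ):ℤ) * X^a * gser a K)
        = (C ((a:ℕ):ℤ) * X^a) * (((1 - (X:Polynomial ℤ)^a) * gser a K) * ∏ b ∈ (AA K).erase a, (1 - (X:Polynomial ℤ)^b)) := by
          rw [show ((1 - (X:Polynomial ℤ)^a) * gser a K) * ∏ b ∈ (AA K).erase a, (1 - (X:Polynomial ℤ)^b)
              = gser a K * ((1 - (X:Polynomial ℤ)^a) * ∏ b ∈ (AA K).erase a, (1 - (X:Polynomial ℤ)^b)) from by ring,
            hea]
          ring
      _ = (C ((a:ℕ):ℤ) * X^a) * ((1 - X^(a*(K+1))) * ∏ b ∈ (AA K).erase a, (1 - (X:Polynomial ℤ)^b)) := by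
          rw [one_sub_mul_gser]
      _ = C ((a:ℕ):ℤ) * X^a * ∏ b ∈ (AA K).erase a, (1 - (X:Polynomial ℤ)^b)
          - C ((a:ℕ):ℤ) * (X^a * X^(a*(K+1))) * ∏ b ∈ (AA K).erase a, (1 - (X:Polynomial ℤ)^b) := by
          ring
      _ = C ((a:ℕ):ℤ) * X^a * ∏ b ∈ (AA K).erase a, (1 - (X:Polynomial ℤ)^b)
          - C ((a:ℕ):ℤ) * X^(a*(K+2)) * ∏ b ∈ (AA K).erase a, (1 - (X:Polynomial ℤ)^b) := by
          rw [← pow_add, show a + a*(K+1) = a*(K+2) by ring]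
  -- coefficient of K in the junk sum is 0
  have hjunk : (∑ a ∈ AA K, C ((a:ℕ):ℤ) * X^(a*(K+2)) * ∏ b ∈ (AA K).erase a, (1 - (X:Polynomial ℤ)^b)).coeff K = 0 := by
    rw [Polynomial.finset_sum_coeff]
    apply Finset.sum_eq_zero
    intro a ha
    have ha1 := (AA_mem ha).1
    rw [show C ((a:ℕ):ℤ) * X^(a*(K+2)) * ∏ b ∈ (AA K).erase a, (1 - (X:Polynomial ℤ)^b)
        = C ((a:ℕ):ℤ) * ((∏ b ∈ (AA K).erase a, (1 - (X:Polynomial ℤ)^b)) * X^(a*(K+2))) from by ring,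
      Polynomial.coeff_C_mul, Polynomial.coeff_mul_X_pow']
    rw [if_neg (by nlinarith)]
    ring
  -- coefficient of K in X * P'
  have hXP : (X * derivative P).coeff K = thc K * (K:ℤ) := by
    rw [show K = (K-1)+1 by omega, Polynomial.coeff_X_mul, Polynomial.coeff_derivative]
    rw [show K-1+1 = K by omega]
    rw [hP, prod_AA, PP_coeff K K le_rfl]
    congr 1
    omega
  have hfin := congrArg (fun p : Polynomial ℤ => p.coeff K) hPS
  rw [Polynomial.coeff_sub, Polynomial.coeff_neg, hXP, hjunk, h0] at hfin
  have h2 : (P * SS K).coeff K = 0 := by rw [hfin]; ring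
  rw [← h2, Polynomial.coeff_mul]
  apply Finset.sum_congr rfl
  intro uv huv
  rw [Finset.HasAntidiagonal.mem_antidiagonal] at huv
  rw [hP, prod_AA, PP_coeff K uv.1 (by omega), SS_coeff K uv.2 (by omega)]

/-- Sum of divisors `≡ 0, 1, 3 (mod 4)`, extended by `0` for nonpositive arguments. -/
def sigmaBarZ (m : ℤ) : ℤ :=
  if m ≤ 0 then 0 else ∑ d ∈ m.toNat.divisors.filter (fun d => d % 4 ≠ 2), (d : ℤ)

lemma sbz_eq (v : ℕ) : sigmaBarZ ((v:ℕ):ℤ) = sbN v := by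
  unfold sigmaBarZ sbN
  rcases Nat.eq_zero_or_pos v with rfl | hv
  · simp
  · rw [if_neg (by omega)]
    simp

lemma sbz_nonpos {x : ℤ} (h : x ≤ 0) : sigmaBarZ x = 0 := if_pos h

section main
variable (n : ℕ)

lemma sumB (hn : 1 ≤ n) :
    ∑ m ∈ Icc (-(2*(n:ℤ))-2) (2*(n:ℤ)+3), sg m * sigmaBarZ ((n:ℤ) - hexZ m)
      = (∑ j ∈ Icc (-(n:ℤ)-1) ((n:ℤ)+1), sigmaBarZ ((n:ℤ) - hexZ (2*j)))
        - ∑ j ∈ Icc (-(n:ℤ)-1) ((n:ℤ)+1), sigmaBarZ ((n:ℤ) - hexZ (2*j+1)) := by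
  classical
  rw [← Finset.sum_filter_add_sum_filter_not (Icc (-(2*(n:ℤ))-2) (2*(n:ℤ)+3)) (fun m => Even m)]
  have heq1 : (Icc (-(2*(n:ℤ))-2) (2*(n:ℤ)+3)).filter (fun m => Even m)
      = (Icc (-(n:ℤ)-1) ((n:ℤ)+1)).image (fun j => 2*j) := by
    ext m
    simp only [Finset.mem_filter, Finset.mem_Icc, Finset.mem_image]
    constructor
    · rintro ⟨⟨h1, h2⟩, ⟨r, rfl⟩⟩
      exact ⟨r, ⟨by omega, by omega⟩, by ring⟩
    · rintro ⟨j, ⟨h1, h2⟩, rfl⟩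
      exact ⟨⟨by omega, by omega⟩, ⟨j, by ring⟩⟩
  have heq2 : (Icc (-(2*(n:ℤ))-2) (2*(n:ℤ)+3)).filter (fun m => ¬ Even m)
      = (Icc (-(n:ℤ)-1) ((n:ℤ)+1)).image (fun j => 2*j+1) := by
    ext m
    simp only [Finset.mem_filter, Finset.mem_Icc, Finset.mem_image]
    constructor
    · rintro ⟨⟨h1, h2⟩, hodd⟩
      rw [Int.not_even_iff_odd] at hodd
      obtain ⟨r, rfl⟩ := hodd
      exact ⟨r, ⟨by omega, by omega⟩, rfl⟩
    · rintro ⟨j, ⟨h1, h2⟩, rfl⟩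
      refine ⟨⟨by omega, by omega⟩, ?_⟩
      rw [Int.not_even_iff_odd]
      exact ⟨j, rfl⟩
  rw [heq1, heq2, Finset.sum_image (by intro x _ y _ h; simp only at h; omega),
    Finset.sum_image (by intro x _ y _ h; simp only at h; omega)]
  have hs1 : ∀ j : ℤ, sg (2*j) * sigmaBarZ ((n:ℤ) - hexZ (2*j)) = sigmaBarZ ((n:ℤ) - hexZ (2*j)) := by
    intro j
    rw [show sg (2*j) = 1 from by unfold sg; rw [if_pos ⟨j, by ring⟩], one_mul]
  have hs2 : ∀ j : ℤ, sg (2*j+1) * sigmaBarZ ((n:ℤ) - hexZ (2*j+1))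
      = - sigmaBarZ ((n:ℤ) - hexZ (2*j+1)) := by
    intro j
    rw [show sg (2*j+1) = -1 from by
      unfold sg
      rw [if_neg (by rw [Int.even_add_one]; exact fun hc => (by simpa using hc ⟨j, by ring⟩))]]
    ring
  rw [Finset.sum_congr rfl (fun j _ => hs1 j), Finset.sum_congr rfl (fun j _ => hs2 j),
    Finset.sum_neg_distrib]
  ring

lemma sumD (hn : 1 ≤ n) :
    ∑ m ∈ Icc (-(2*(n:ℤ))-2) (2*(n:ℤ)+3), sg m * sigmaBarZ ((n:ℤ) - hexZ m)
      = ∑ j ∈ range (n+1), thc j * sbN (n - j) := by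
  classical
  have hL : ∑ m ∈ Icc (-(2*(n:ℤ))-2) (2*(n:ℤ)+3), sg m * sigmaBarZ ((n:ℤ) - hexZ m)
      = ∑ m ∈ (Icc (-(2*(n:ℤ))-2) (2*(n:ℤ)+3)).filter (fun m => hexZ m ≤ (n:ℤ)),
          sg m * sigmaBarZ ((n:ℤ) - hexZ m) := by
    refine (Finset.sum_subset (Finset.filter_subset _ _) ?_).symm
    intro m hm hnm
    rw [Finset.mem_filter] at hnm
    have : ¬ hexZ m ≤ (n:ℤ) := fun hc => hnm ⟨hm, hc⟩
    rw [sbz_nonpos (by omega), mul_zero]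
  have hR : ∑ j ∈ range (n+1), thc j * sbN (n - j)
      = ∑ j ∈ (range (n+1)).filter (fun j => thc j ≠ 0), thc j * sbN (n - j) := by
    refine (Finset.sum_subset (Finset.filter_subset _ _) ?_).symm
    intro j hj hnj
    rw [Finset.mem_filter] at hnj
    have : thc j = 0 := by by_contra hc; exact hnj ⟨hj, hc⟩
    rw [this, zero_mul]
  rw [hL, hR]
  apply Finset.sum_bij (fun (m : ℤ) (_ : m ∈ _) => hexN m)
  · intro m hm
    rw [Finset.mem_filter] at hm ⊢
    obtain ⟨_, hle⟩ := hm
    have h0 := hexZ_nonneg m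
    constructor
    · rw [Finset.mem_range]; unfold hexN; omega
    · rw [thc_spec1 (show hexZ m = ((hexN m : ℕ):ℤ) from by unfold hexN; omega)]
      unfold sg
      split_ifs <;> norm_num
  · intro m hm m' hm' he
    rw [Finset.mem_filter] at hm hm'
    have h0 := hexZ_nonneg m
    have h0' := hexZ_nonneg m'
    apply hexZ_inj
    unfold hexN at he
    omega
  · intro j hj
    rw [Finset.mem_filter, Finset.mem_range] at hj
    obtain ⟨hjr, hjne⟩ := hj
    have hex : ∃ m : ℤ, hexZ m = (j:ℤ) := by
      by_contra hc
      push_neg at hc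
      exact hjne (thc_spec0 hc)
    obtain ⟨m, hm⟩ := hex
    have hb := abs_le_of_hex hm
    refine ⟨m, ?_, ?_⟩
    · rw [Finset.mem_filter, Finset.mem_Icc]
      refine ⟨⟨by omega, by omega⟩, by omega⟩
    · unfold hexN; omega
  · intro m hm
    rw [Finset.mem_filter] at hm
    obtain ⟨_, hle⟩ := hm
    have h0 := hexZ_nonneg m
    rw [thc_spec1 (show hexZ m = ((hexN m : ℕ):ℤ) from by unfold hexN; omega)]
    congr 1
    rw [show (n:ℤ) - hexZ m = ((n - hexN m : ℕ) : ℤ) from by unfold hexN; push_cast; omega,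
      sbz_eq]

lemma keyN (hn : 1 ≤ n) (h0 : thc n = 0) :
    ∑ j ∈ range (n+1), thc j * sbN (n - j) = 0 := by
  have h := key_poly n hn h0
  rw [Finset.Nat.sum_antidiagonal_eq_sum_range_succ_mk] at h
  exact h

end main

theorem sum_sigmaBar_even_index_eq_odd_index (n : ℕ) (hn : 0 < n)
    (h : ¬ ∃ m : ℤ, (n : ℤ) = m * (2 * m - 1)) :
    ∑' j : ℤ, sigmaBarZ ((n : ℤ) - (2 * j) * (2 * (2 * j) - 1)) =
      ∑' j : ℤ, sigmaBarZ ((n : ℤ) - (2 * j + 1) * (2 * (2 * j + 1) - 1)) := by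
  push_neg at h
  have h0 : thc n = 0 := thc_spec0 (by
    intro m hc
    exact absurd (show (n:ℤ) = m * (2*m-1) from by rw [← hc]; rfl) (h m))
  have hvan1 : ∀ j : ℤ, j ∉ Icc (-(n:ℤ)-1) ((n:ℤ)+1) →
      sigmaBarZ ((n : ℤ) - (2 * j) * (2 * (2 * j) - 1)) = 0 := by
    intro j hj
    rw [Finset.mem_Icc] at hj
    push_neg at hj
    apply sbz_nonpos
    have hb : (n:ℤ)+2 ≤ j ∨ j ≤ -(n:ℤ)-2 := by omega
    rcases hb with hb | hb <;> nlinarith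
  have hvan2 : ∀ j : ℤ, j ∉ Icc (-(n:ℤ)-1) ((n:ℤ)+1) →
      sigmaBarZ ((n : ℤ) - (2 * j + 1) * (2 * (2 * j + 1) - 1)) = 0 := by
    intro j hj
    rw [Finset.mem_Icc] at hj
    push_neg at hj
    apply sbz_nonpos
    have hb : (n:ℤ)+2 ≤ j ∨ j ≤ -(n:ℤ)-2 := by omega
    rcases hb with hb | hb <;> nlinarith
  rw [tsum_eq_sum (hvan1), tsum_eq_sum (hvan2)]
  have hB := sumB n hn
  have hD := sumD n hn
  have hK := keyN n hn h0
  simp only [hexZ] at hB hD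
  have hAB : (∑ j ∈ Icc (-(n:ℤ)-1) ((n:ℤ)+1), sigmaBarZ ((n:ℤ) - (2*j) * (2*(2*j) - 1)))
      - ∑ j ∈ Icc (-(n:ℤ)-1) ((n:ℤ)+1), sigmaBarZ ((n:ℤ) - (2*j+1) * (2*(2*j+1) - 1)) = 0 := by
    rw [← hB]
    rw [hD]
    exact hK
  linarith [hAB]
end
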